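/- For each integer ℓ ≥ 0 and real k > 0, the function X_k^ℓ(ρ) = ((−1)^{ℓ+1} sinhℓρ / (∏_{n=0}^{ℓ}(n²+k²))^{1/2}) · d^{ℓ+1}cos(kρ)/d(coshρ)^{ℓ+1} satisfies the radial equation (1/sinh²ρ) d/dρ(sinh²ρ dX/dρ) + (k² + 1 − ℓ(ℓ+1)/sinh²ρ) X = 0 on (0,∞). -/

import Mathlib

/-!
STATEMENT 2: For each integer ℓ ≥ 0 and real k > 0, the hyperspherical Bessel
function
X_k^ℓ(ρ) = ((−1)^{ℓ+1} sinh^ℓρ / (∏_{n=0}^{ℓ}(n²+k²))^{1/2}) · d^{ℓ+1}cos(kρ)/d(coshρ)^{ℓ+1}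
satisfies the radial equation
(1/sinh²ρ) d/dρ (sinh²ρ dX/dρ) + (k² + 1 − ℓ(ℓ+1)/sinh²ρ) X = 0 on (0,∞).
-/

open Real

/-- `arcosh`, the inverse of `cosh` on `[1,∞)` (not yet in Mathlib). -/
noncomputable def arcosh (x : ℝ) : ℝ := Real.log (x + Real.sqrt (x ^ 2 - 1))

/-- The derivative with respect to `u = cosh ρ`, iterated `m` times and
evaluated back at `u = cosh ρ`: `cos(kρ)` is regarded as the function
`u ↦ cos (k · arcosh u)` of `u`. -/
noncomputable def dCoshIter (k : ℝ) (m : ℕ) (ρ : ℝ) : ℝ :=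
  iteratedDeriv m (fun u => Real.cos (k * _root_.arcosh u)) (Real.cosh ρ)

/-- The radial hyperspherical Bessel function `X_k^ℓ`. -/
noncomputable def hypersphericalBessel (k : ℝ) (ℓ : ℕ) (ρ : ℝ) : ℝ :=
  ((-1 : ℝ) ^ (ℓ + 1) * Real.sinh ρ ^ ℓ /
      Real.sqrt (∏ n ∈ Finset.range (ℓ + 1), ((n : ℝ) ^ 2 + k ^ 2))) *
    dCoshIter k (ℓ + 1) ρ

/-!
In the variable `u = cosh ρ`, the function `f u = cos (k * arcosh u)` satisfies
`(u² - 1) f'' + u f' + k² f = 0`, and differentiating `m` times gives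
`(u² - 1) f⁽ᵐ⁺²⁾ + (2m + 1) u f⁽ᵐ⁺¹⁾ + (m² + k²) f⁽ᵐ⁾ = 0`. Since `d/dρ = sinh ρ · d/du`, this
recurrence can be proved by induction in the variable `ρ`, starting from `f (cosh ρ) = cos (k ρ)`.
For `m = ℓ + 1` it is exactly the radial equation for `sinh ρ ^ ℓ * f⁽ˡ⁺¹⁾ (cosh ρ)`, and the
normalising constant of `X_k^ℓ` plays no role because the equation is linear.
-/

open Set Filter Topology

lemma arcosh_eq_real_arcosh : _root_.arcosh = Real.arcosh := rfl

lemma analyticAt_cos_mul_arcosh (k : ℝ) {u : ℝ} (hu : 1 < u) :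
    AnalyticAt ℝ (fun u => cos (k * _root_.arcosh u)) u :=
  analyticAt_cos.comp (analyticAt_const.mul (analyticAt_arcosh hu))

lemma hasDerivAt_dCoshIter (k : ℝ) (m : ℕ) {ρ : ℝ} (hρ : 0 < ρ) :
    HasDerivAt (dCoshIter k m) (sinh ρ * dCoshIter k (m + 1) ρ) ρ := by
  have hu : 1 < cosh ρ := one_lt_cosh.mpr hρ.ne'
  have hdiff := ((analyticAt_cos_mul_arcosh k hu).iterated_deriv m).differentiableAt
  rw [← iteratedDeriv_eq_iterate] at hdiff
  rw [dCoshIter, iteratedDeriv_succ, mul_comm]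
  exact hdiff.hasDerivAt.comp ρ (hasDerivAt_cosh ρ)

lemma dCoshIter_zero (k : ℝ) {ρ : ℝ} (hρ : 0 ≤ ρ) : dCoshIter k 0 ρ = cos (k * ρ) := by
  rw [dCoshIter, iteratedDeriv_zero, arcosh_eq_real_arcosh, arcosh_cosh hρ]

lemma sinh_mul_dCoshIter_one (k : ℝ) {ρ : ℝ} (hρ : 0 < ρ) :
    sinh ρ * dCoshIter k 1 ρ = -(k * sin (k * ρ)) := by
  have hcos : HasDerivAt (fun r => cos (k * r)) (-(k * sin (k * ρ))) ρ := by
    simpa [mul_comm (sin _)] using ((hasDerivAt_id ρ).const_mul k).cos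
  have hev : dCoshIter k 0 =ᶠ[𝓝 ρ] fun r => cos (k * r) := by
    filter_upwards [Ioi_mem_nhds hρ] with r hr using dCoshIter_zero k (le_of_lt hr)
  exact (hasDerivAt_dCoshIter k 0 hρ).unique (hcos.congr_of_eventuallyEq hev)

lemma dCoshIter_recurrence (k : ℝ) (m : ℕ) {ρ : ℝ} (hρ : 0 < ρ) :
    sinh ρ ^ 2 * dCoshIter k (m + 2) ρ + (2 * m + 1) * cosh ρ * dCoshIter k (m + 1) ρ
      + (m ^ 2 + k ^ 2) * dCoshIter k m ρ = 0 := by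
  induction m generalizing ρ with
  | zero =>
    have hev : (fun r => sinh r * dCoshIter k 1 r) =ᶠ[𝓝 ρ] fun r => -(k * sin (k * r)) := by
      filter_upwards [Ioi_mem_nhds hρ] with r hr using sinh_mul_dCoshIter_one k hr
    have hsin : HasDerivAt (fun r => -(k * sin (k * r))) (-(k * (cos (k * ρ) * k))) ρ := by
      simpa using (((hasDerivAt_id ρ).const_mul k).sin.const_mul k).fun_neg
    have hderiv := ((hasDerivAt_sinh ρ).fun_mul (hasDerivAt_dCoshIter k 1 hρ)).unique
      (hsin.congr_of_eventuallyEq hev)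
    rw [dCoshIter_zero k hρ.le]
    push_cast
    linear_combination hderiv
  | succ m ih =>
    have hev : (fun r => sinh r ^ 2 * dCoshIter k (m + 2) r
        + (2 * m + 1) * cosh r * dCoshIter k (m + 1) r + (m ^ 2 + k ^ 2) * dCoshIter k m r)
        =ᶠ[𝓝 ρ] fun _ => 0 := by
      filter_upwards [Ioi_mem_nhds hρ] with r hr using ih hr
    have hderiv := (((((hasDerivAt_sinh ρ).fun_pow 2).fun_mul
      (hasDerivAt_dCoshIter k (m + 2) hρ)).fun_add
      (((hasDerivAt_cosh ρ).const_mul (2 * (m : ℝ) + 1)).fun_mul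
        (hasDerivAt_dCoshIter k (m + 1) hρ))).fun_add
      ((hasDerivAt_dCoshIter k m hρ).const_mul ((m : ℝ) ^ 2 + k ^ 2))).unique
      ((hasDerivAt_const ρ (0 : ℝ)).congr_of_eventuallyEq hev)
    have hsinh : sinh ρ ≠ 0 := (sinh_pos_iff.mpr hρ).ne'
    norm_num at hderiv
    apply (mul_eq_zero.mp _).resolve_left hsinh
    push_cast
    linear_combination hderiv

lemma natCast_mul_pow_sub_one_mul {R : Type*} [Semiring R] (x : R) (n : ℕ) :
    (n : R) * x ^ (n - 1) * x = n * x ^ n := by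
  rcases eq_or_ne n 0 with rfl | hn
  · simp
  · rw [mul_assoc, pow_sub_one_mul hn]

lemma radial_ode_sinh_pow_mul_dCoshIter (k : ℝ) (ℓ : ℕ) {ρ : ℝ} (hρ : 0 < ρ) :
    (1 / sinh ρ ^ 2) *
        deriv (fun r => sinh r ^ 2 * deriv (fun r => sinh r ^ ℓ * dCoshIter k (ℓ + 1) r) r) ρ
      + (k ^ 2 + 1 - (ℓ : ℝ) * (ℓ + 1) / sinh ρ ^ 2) * (sinh ρ ^ ℓ * dCoshIter k (ℓ + 1) ρ)
      = 0 := by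
  have hflux : (fun r => sinh r ^ 2 * deriv (fun r => sinh r ^ ℓ * dCoshIter k (ℓ + 1) r) r)
      =ᶠ[𝓝 ρ] fun r => ℓ * sinh r ^ (ℓ + 1) * cosh r * dCoshIter k (ℓ + 1) r
        + sinh r ^ (ℓ + 3) * dCoshIter k (ℓ + 2) r := by
    filter_upwards [Ioi_mem_nhds hρ] with r hr
    rw [(((hasDerivAt_sinh r).fun_pow ℓ).fun_mul (hasDerivAt_dCoshIter k (ℓ + 1) hr)).deriv]
    linear_combination sinh r * cosh r * dCoshIter k (ℓ + 1) r
      * natCast_mul_pow_sub_one_mul (sinh r) ℓ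
  have hderiv := (((((hasDerivAt_sinh ρ).fun_pow (ℓ + 1)).const_mul (ℓ : ℝ)).fun_mul
      (hasDerivAt_cosh ρ)).fun_mul (hasDerivAt_dCoshIter k (ℓ + 1) hρ)).fun_add
    (((hasDerivAt_sinh ρ).fun_pow (ℓ + 3)).fun_mul (hasDerivAt_dCoshIter k (ℓ + 2) hρ))
  rw [hflux.deriv_eq, hderiv.deriv]
  have hrec := dCoshIter_recurrence k (ℓ + 1) hρ
  have hsinh : sinh ρ ≠ 0 := (sinh_pos_iff.mpr hρ).ne'
  simp only [Nat.add_sub_cancel, show ℓ + 3 - 1 = ℓ + 2 by omega]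
  field_simp
  push_cast at hrec ⊢
  linear_combination sinh ρ ^ (ℓ + 2) * hrec
    + ((ℓ : ℝ) * (ℓ + 1) * sinh ρ ^ ℓ * dCoshIter k (ℓ + 1) ρ) * cosh_sq' ρ

theorem hypersphericalBessel_radial_ode_general (k : ℝ) (ℓ : ℕ) :
    ∀ ρ : ℝ, 0 < ρ →
      (1 / Real.sinh ρ ^ 2) *
          deriv (fun r => Real.sinh r ^ 2 *
            deriv (hypersphericalBessel k ℓ) r) ρ
        + (k ^ 2 + 1 - (ℓ : ℝ) * (ℓ + 1) / Real.sinh ρ ^ 2) *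
            hypersphericalBessel k ℓ ρ = 0 := by
  intro ρ hρ
  set c : ℝ := (-1 : ℝ) ^ (ℓ + 1) /
    Real.sqrt (∏ n ∈ Finset.range (ℓ + 1), ((n : ℝ) ^ 2 + k ^ 2))
  have hX : hypersphericalBessel k ℓ = fun r => c * (sinh r ^ ℓ * dCoshIter k (ℓ + 1) r) := by
    funext r
    rw [hypersphericalBessel]
    ring
  have hflux : (fun r => sinh r ^ 2 * deriv (hypersphericalBessel k ℓ) r) = fun r =>
      c * (sinh r ^ 2 * deriv (fun r => sinh r ^ ℓ * dCoshIter k (ℓ + 1) r) r) := by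
    funext r
    rw [hX, deriv_const_mul_field', mul_left_comm]
  rw [hflux, deriv_const_mul_field', hX]
  linear_combination c * radial_ode_sinh_pow_mul_dCoshIter k ℓ hρ

/-- `X_k^ℓ` satisfies the radial equation
`(1/sinh²ρ)(sinh²ρ X')' + (k² + 1 − ℓ(ℓ+1)/sinh²ρ) X = 0` on `(0,∞)`. -/
theorem hypersphericalBessel_radial_ode (k : ℝ) (hk : 0 < k) (ℓ : ℕ) :
    ∀ ρ : ℝ, 0 < ρ →
      (1 / Real.sinh ρ ^ 2) *
          deriv (fun r => Real.sinh r ^ 2 *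
            deriv (hypersphericalBessel k ℓ) r) ρ
        + (k ^ 2 + 1 - (ℓ : ℝ) * (ℓ + 1) / Real.sinh ρ ^ 2) *
            hypersphericalBessel k ℓ ρ = 0 :=
  hypersphericalBessel_radial_ode_general k ℓ
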